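/- Let h_n(x) = a(x−x_1)⋯(x−x_n) and g_n(x) = b(x−ζ_1)⋯(x−ζ_n) be real polynomials with real and simple zeros, where a, b > 0, and suppose the zeros interlace as x_1 < ζ_1 < x_2 < ζ_2 < ⋯ < x_n < ζ_n. Then for every real constant c > 0 the polynomial f(x) = h_n(x) + c·g_n(x) has n real simple zeros η_1 < ⋯ < η_n satisfying x_1 < η_1 < ζ_1 < x_2 < η_2 < ζ_2 < ⋯ < x_n < η_n < ζ_n. Moreover each η_k = η_k(c) is a strictly increasing function of c, and for each k = 1,…,n one has lim_{c→∞} η_k(c) = ζ_k and lim_{c→∞} c·[ζ_k − η_k(c)] = h_n(ζ_k)/g_n′(ζ_k). -/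

import Mathlib

open Polynomial Filter Topology

/-!
With the sign `s = (-1)^(n-k)`, `s g > 0` on `[x_k, ζ_k)` and `s h < 0` on `(x_k, ζ_k]`, so
`s f_c` goes from `c s g(x_k) > 0` to `s h(ζ_k) < 0` and `f_c` has a root `η_k(c) ∈ (x_k, ζ_k)`.
These `n` roots of the degree-`n` polynomial `f_c` are all of its roots, so `η_k(c)` is the only
root in `(x_k, ζ_k)`, and any `t` in that interval with `s f_c(t) > 0` lies below it. Since
`f_{c'}(η_k(c)) = (c' - c) g(η_k(c))`, this gives monotonicity in `c`; since `s f_c(t) → ∞` for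
fixed `t < ζ_k`, it gives `η_k(c) → ζ_k`. Finally `c (ζ_k - η_k) = h(η_k) / slope g ζ_k η_k`,
which tends to `h(ζ_k) / g'(ζ_k)`.
-/

open Finset Lagrange
open Set (Ioo Ico Ioc)

theorem eval_C_mul_nodal_at_node {ι R : Type*} [CommRing R] (α : R) {s : Finset ι} {v : ι → R}
    {i : ι} (hi : i ∈ s) : (C α * nodal s v).eval (v i) = 0 := by
  rw [eval_mul, eval_nodal_at_node hi, mul_zero]

theorem eval_derivative_nodal_ne_zero {ι F : Type*} [Field F] [DecidableEq ι] {s : Finset ι}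
    {v : ι → F} (hv : Set.InjOn v s) {i : ι} (hi : i ∈ s) :
    (derivative (nodal s v)).eval (v i) ≠ 0 := fun h0 =>
  nodalWeight_ne_zero hv hi (by rw [nodalWeight_eq_eval_derivative_nodal hi, h0, inv_zero])

theorem degree_nodal_sub_nodal_lt {ι F : Type*} [Field F] (s : Finset ι) (v w : ι → F) :
    (nodal s v - nodal s w).degree < #s := by
  rw [← degree_nodal (v := v)]
  exact degree_sub_lt_left (by simp) nodal_ne_zero
    (by rw [nodal_monic.leadingCoeff, nodal_monic.leadingCoeff])

theorem C_mul_nodal_add_C_mul_nodal_eq {ι F : Type*} [Field F] {s : Finset ι} {v w u : ι → F}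
    {α β : F} (hu : Set.InjOn u s)
    (hroot : ∀ i ∈ s, (C α * nodal s v + C β * nodal s w).eval (u i) = 0) :
    C α * nodal s v + C β * nodal s w = C (α + β) * nodal s u := by
  refine eq_of_degree_sub_lt_of_eval_index_eq s hu ?_ fun i hi => ?_
  · have hsplit : C α * nodal s v + C β * nodal s w - C (α + β) * nodal s u =
        α • (nodal s v - nodal s u) + β • (nodal s w - nodal s u) := by
      simp only [smul_eq_C_mul, C_add]; ring
    rw [hsplit, ← mem_degreeLT]
    exact add_mem (Submodule.smul_mem _ _ (mem_degreeLT.2 (degree_nodal_sub_nodal_lt s v u)))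
      (Submodule.smul_mem _ _ (mem_degreeLT.2 (degree_nodal_sub_nodal_lt s w u)))
  · rw [hroot i hi, eval_C_mul_nodal_at_node _ hi]

theorem pos_neg_one_pow_mul_eval_nodal_range {n m : ℕ} (hmn : m ≤ n) {y : ℕ → ℝ} {t : ℝ}
    (hlt : ∀ j < m, y j < t) (hgt : ∀ j, m ≤ j → j < n → t < y j) :
    0 < (-1) ^ (n - m) * (nodal (range n) y).eval t := by
  have hflip : (-1) ^ (n - m) * ∏ j ∈ Ico m n, (t - y j) = ∏ j ∈ Ico m n, (y j - t) := by
    rw [← Nat.card_Ico m n, ← prod_neg]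
    simp only [neg_sub]
  rw [eval_nodal, ← prod_range_mul_prod_Ico _ hmn, mul_left_comm, hflip]
  refine mul_pos (prod_pos fun j hj => ?_) (prod_pos fun j hj => ?_)
  · exact sub_pos.2 (hlt j (mem_range.1 hj))
  · obtain ⟨hmj, hjn⟩ := mem_Ico.1 hj
    exact sub_pos.2 (hgt j hmj hjn)

theorem exists_mem_Ioo_eval_eq_zero {p : ℝ[X]} {s t v : ℝ} (htv : t ≤ v)
    (ht : 0 < s * p.eval t) (hv : s * p.eval v < 0) : ∃ y ∈ Ioo t v, p.eval y = 0 := by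
  obtain ⟨y, hy, hy0⟩ := intermediate_value_Ioo' htv
    (continuous_const.mul p.continuous).continuousOn ⟨hv, ht⟩
  exact ⟨y, hy, (mul_eq_zero.1 hy0).resolve_left (by rintro rfl; simp at ht)⟩

theorem lt_of_forall_eval_eq_zero_imp_eq {p : ℝ[X]} {s t v η : ℝ}
    (huniq : ∀ y ∈ Ioo t v, p.eval y = 0 → y = η) (htv : t ≤ v)
    (ht : 0 < s * p.eval t) (hv : s * p.eval v < 0) : t < η := by
  obtain ⟨y, hy, hy0⟩ := exists_mem_Ioo_eval_eq_zero htv ht hv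
  exact huniq y hy hy0 ▸ hy.1

section Pencil

variable {h g : ℝ[X]} {u v s : ℝ}

theorem exists_root_pencil (huv : u < v) (hgu : 0 < s * g.eval u) (hhu : h.eval u = 0)
    (hv : s * h.eval v < 0) (hgv : g.eval v = 0) {c : ℝ} (hc : 0 < c) :
    ∃ y ∈ Ioo u v, (h + C c * g).eval y = 0 := by
  refine exists_mem_Ioo_eval_eq_zero (s := s) huv.le ?_ ?_
  · simpa [hhu, mul_left_comm s c] using mul_pos hc hgu
  · simpa [hgv] using hv

theorem root_pencil_lt (hg : ∀ t ∈ Ico u v, 0 < s * g.eval t) (hv : s * h.eval v < 0)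
    (hgv : g.eval v = 0) {c c' η η' : ℝ} (hcc' : c < c') (hη : η ∈ Ioo u v)
    (hroot : (h + C c * g).eval η = 0)
    (huniq : ∀ y ∈ Ioo u v, (h + C c' * g).eval y = 0 → y = η') : η < η' := by
  have hshift : (h + C c' * g).eval η = (c' - c) * g.eval η := by
    simp only [eval_add, eval_mul, eval_C] at hroot ⊢; linear_combination hroot
  refine lt_of_forall_eval_eq_zero_imp_eq (s := s)
    (fun y hy => huniq y ⟨hη.1.trans hy.1, hy.2⟩) hη.2.le ?_ (by simpa [hgv] using hv)
  rw [hshift, mul_left_comm]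
  exact mul_pos (sub_pos.2 hcc') (hg η (Set.Ioo_subset_Ico_self hη))

theorem tendsto_root_pencil (huv : u < v) (hg : ∀ t ∈ Ico u v, 0 < s * g.eval t)
    (hv : s * h.eval v < 0) (hgv : g.eval v = 0) {η : ℝ → ℝ}
    (hη : ∀ᶠ c in atTop, η c ∈ Ioo u v ∧
      ∀ y ∈ Ioo u v, (h + C c * g).eval y = 0 → y = η c) :
    Tendsto η atTop (𝓝 v) := by
  refine tendsto_order.2 ⟨fun w hw => ?_, fun w hw => ?_⟩
  · set t := max w u
    have ht : t ∈ Ico u v := ⟨le_max_right w u, max_lt hw huv⟩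
    have hgrow : Tendsto (fun c : ℝ => s * h.eval t + c * (s * g.eval t)) atTop atTop :=
      tendsto_atTop_add_const_left _ _ (tendsto_id.atTop_mul_const (hg t ht))
    filter_upwards [hη, hgrow.eventually_gt_atTop 0] with c ⟨hηc, huniq⟩ hpos
    refine (le_max_left w u).trans_lt (lt_of_forall_eval_eq_zero_imp_eq (s := s)
      (fun y hy => huniq y ⟨ht.1.trans_lt hy.1, hy.2⟩) ht.2.le ?_ (by simpa [hgv] using hv))
    simp only [eval_add, eval_mul, eval_C]
    linarith
  · filter_upwards [hη] with c hc using hc.1.2.trans hw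

theorem tendsto_mul_sub_root_pencil (hgv : g.eval v = 0) (hg' : g.derivative.eval v ≠ 0)
    {η : ℝ → ℝ} (hη : Tendsto η atTop (𝓝[≠] v))
    (hroot : ∀ᶠ c in atTop, (h + C c * g).eval (η c) = 0) :
    Tendsto (fun c => c * (v - η c)) atTop (𝓝 (h.eval v / g.derivative.eval v)) := by
  have hslope : Tendsto (fun c => slope g.eval v (η c)) atTop (𝓝 (g.derivative.eval v)) :=
    (hasDerivAt_iff_tendsto_slope.1 (g.hasDerivAt v)).comp hη
  have hquot := ((h.continuous.tendsto v).comp (tendsto_nhdsWithin_iff.1 hη).1).div hslope hg'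
  refine hquot.congr' ?_
  filter_upwards [hroot, hslope.eventually_ne hg', tendsto_nhdsWithin_iff.1 hη |>.2]
    with c hc hsl hne
  rw [slope_def_field, hgv, sub_zero] at hsl
  have hgη : g.eval (η c) ≠ 0 := fun h0 => hsl (by rw [h0, zero_div])
  have hsub : η c - v ≠ 0 := sub_ne_zero.2 hne
  simp only [Pi.div_apply, Function.comp_apply, slope_def_field, hgv, sub_zero]
  simp only [eval_add, eval_mul, eval_C] at hc
  field_simp
  linear_combination (η c - v) * hc

end Pencil

def Interlaced (n : ℕ) (x ζ : ℕ → ℝ) : Prop :=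
  (∀ k < n, x k < ζ k) ∧ ∀ k, k + 1 < n → ζ k < x (k + 1)

namespace Interlaced

variable {n : ℕ} {x ζ : ℕ → ℝ}

theorem zeta_lt_x (H : Interlaced n x ζ) {i j : ℕ} (hij : i < j) (hj : j < n) : ζ i < x j := by
  induction j, hij using Nat.le_induction with
  | base => exact H.2 i hj
  | succ j hij ih => exact (ih (by omega)).trans ((H.1 j (by omega)).trans (H.2 j hj))

theorem zeta_lt_zeta (H : Interlaced n x ζ) {i j : ℕ} (hij : i < j) (hj : j < n) :
    ζ i < ζ j :=
  (H.zeta_lt_x hij hj).trans (H.1 j hj)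

theorem injOn_zeta (H : Interlaced n x ζ) : Set.InjOn ζ (range n) :=
  StrictMonoOn.injOn fun _ _ _ hj hij => H.zeta_lt_zeta hij (mem_range.1 hj)

theorem eq_of_mem_Ioo (H : Interlaced n x ζ) {i j : ℕ} (hi : i < n) (hj : j < n) {y : ℝ}
    (hyi : y ∈ Ioo (x i) (ζ i)) (hyj : y ∈ Ioo (x j) (ζ j)) : i = j := by
  rcases lt_trichotomy i j with hij | rfl | hji
  · exact absurd ((hyi.2.trans (H.zeta_lt_x hij hj)).trans hyj.1) (lt_irrefl y)
  · rfl
  · exact absurd ((hyj.2.trans (H.zeta_lt_x hji hi)).trans hyi.1) (lt_irrefl y)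

theorem sign_mul_eval_C_mul_nodal_zeta_pos (H : Interlaced n x ζ) {b : ℝ} (hb : 0 < b) {k : ℕ}
    (hk : k < n) {t : ℝ} (ht : t ∈ Ico (x k) (ζ k)) :
    0 < (-1) ^ (n - k) * (C b * nodal (range n) ζ).eval t := by
  rw [eval_mul, eval_C, mul_left_comm]
  refine mul_pos hb
    (pos_neg_one_pow_mul_eval_nodal_range hk.le (fun j hj => ?_) fun j hj hjn => ?_)
  · exact (H.zeta_lt_x hj hk).trans_le ht.1
  · exact ht.2.trans_le ((eq_or_lt_of_le hj).elim (fun h => h ▸ le_rfl)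
      fun h => (H.zeta_lt_zeta h hjn).le)

theorem sign_mul_eval_C_mul_nodal_x_neg (H : Interlaced n x ζ) {a : ℝ} (ha : 0 < a) {k : ℕ}
    (hk : k < n) {t : ℝ} (ht : t ∈ Ioc (x k) (ζ k)) :
    (-1) ^ (n - k) * (C a * nodal (range n) x).eval t < 0 := by
  have hsign : (-1 : ℝ) ^ (n - k) = -(-1) ^ (n - (k + 1)) := by
    rw [show n - k = n - (k + 1) + 1 by omega, pow_succ, mul_neg_one]
  rw [eval_mul, eval_C, mul_left_comm, hsign, neg_mul, mul_neg, neg_lt_zero]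
  refine mul_pos ha
    (pos_neg_one_pow_mul_eval_nodal_range hk (fun j hj => ?_) fun j hj hjn => ?_)
  · exact (lt_or_eq_of_le (Nat.lt_succ_iff.1 hj)).elim
      (fun h => ((H.1 j (h.trans hk)).trans (H.zeta_lt_x h hk)).trans ht.1) (fun h => h ▸ ht.1)
  · exact ht.2.trans_lt (H.zeta_lt_x hj hjn)

theorem eq_of_eval_C_mul_nodal_eq_zero (H : Interlaced n x ζ) {η : ℕ → ℝ}
    (hη : ∀ k < n, η k ∈ Ioo (x k) (ζ k)) {L : ℝ} (hL : L ≠ 0) {k : ℕ} (hk : k < n) {y : ℝ}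
    (hy : y ∈ Ioo (x k) (ζ k)) (hroot : (C L * nodal (range n) η).eval y = 0) : y = η k := by
  rw [eval_mul, eval_C, eval_nodal] at hroot
  obtain ⟨j, hj, hyj⟩ := prod_eq_zero_iff.1 ((mul_eq_zero.1 hroot).resolve_left hL)
  rw [sub_eq_zero] at hyj
  have hjn := mem_range.1 hj
  rw [hyj] at hy ⊢
  rw [H.eq_of_mem_Ioo hjn hk (hη j hjn) hy]

theorem exists_roots_pencil (H : Interlaced n x ζ) {a b : ℝ} (ha : 0 < a) (hb : 0 < b) :
    ∃ η : ℝ → ℕ → ℝ, ∀ c > 0, (∀ k < n, η c k ∈ Ioo (x k) (ζ k)) ∧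
      C a * nodal (range n) x + C c * (C b * nodal (range n) ζ) =
        C (a + c * b) * nodal (range n) (η c) := by
  have hroot : ∀ (c : ℝ) (k : ℕ), ∃ y, 0 < c → k < n → y ∈ Ioo (x k) (ζ k) ∧
      (C a * nodal (range n) x + C c * (C b * nodal (range n) ζ)).eval y = 0 := by
    intro c k
    by_cases hck : 0 < c ∧ k < n
    · obtain ⟨hc, hk⟩ := hck
      have hxk : x k < ζ k := H.1 k hk
      obtain ⟨y, hy, hy0⟩ := exists_root_pencil (s := (-1) ^ (n - k)) hxk
        (H.sign_mul_eval_C_mul_nodal_zeta_pos hb hk ⟨le_rfl, hxk⟩)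
        (eval_C_mul_nodal_at_node _ (mem_range.2 hk))
        (H.sign_mul_eval_C_mul_nodal_x_neg ha hk ⟨hxk, le_rfl⟩)
        (eval_C_mul_nodal_at_node _ (mem_range.2 hk)) hc
      exact ⟨y, fun _ _ => ⟨hy, hy0⟩⟩
    · exact ⟨0, fun hc hk => absurd ⟨hc, hk⟩ hck⟩
  choose η hη using hroot
  refine ⟨η, fun c hc => ⟨fun k hk => (hη c k hc hk).1, ?_⟩⟩
  rw [← mul_assoc, ← C_mul]
  refine C_mul_nodal_add_C_mul_nodal_eq (fun i hi j hj hij => ?_) fun k hk => ?_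
  · have hi := mem_range.1 hi
    have hj := mem_range.1 hj
    exact H.eq_of_mem_Ioo hi hj (hη c i hc hi).1 (hij ▸ (hη c j hc hj).1)
  · rw [C_mul, mul_assoc]
    exact (hη c k hc (mem_range.1 hk)).2

end Interlaced

theorem stmt_1_general (n : ℕ) (a b : ℝ) (ha : 0 < a) (hb : 0 < b)
    (x ζ : ℕ → ℝ) (h g : Polynomial ℝ)
    (hh : h = C a * ∏ k ∈ Finset.range n, (X - C (x k)))
    (hg : g = C b * ∏ k ∈ Finset.range n, (X - C (ζ k)))
    (hint1 : ∀ k < n, x k < ζ k)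
    (hint2 : ∀ k, k + 1 < n → ζ k < x (k + 1)) :
    ∃ η : ℝ → ℕ → ℝ,
      (∀ c : ℝ, 0 < c →
        (h + C c * g = C (a + c * b) * ∏ k ∈ Finset.range n, (X - C (η c k))) ∧
        (∀ k < n, x k < η c k ∧ η c k < ζ k) ∧
        (∀ k, k + 1 < n → η c k < η c (k + 1))) ∧
      (∀ k < n, StrictMonoOn (fun c => η c k) (Set.Ioi (0 : ℝ))) ∧
      (∀ k < n, Tendsto (fun c => η c k) atTop (𝓝 (ζ k))) ∧
      (∀ k < n, Tendsto (fun c => c * (ζ k - η c k)) atTop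
        (𝓝 (h.eval (ζ k) / (derivative g).eval (ζ k)))) := by
  have H : Interlaced n x ζ := ⟨hint1, hint2⟩
  rw [← nodal_eq] at hh hg
  obtain ⟨η, hη⟩ := H.exists_roots_pencil ha hb
  rw [← hh, ← hg] at hη
  have hroot : ∀ c > 0, ∀ k < n, (h + C c * g).eval (η c k) = 0 := fun c hc k hk => by
    rw [(hη c hc).2, eval_C_mul_nodal_at_node _ (mem_range.2 hk)]
  have huniq : ∀ c > 0, ∀ k < n, ∀ y ∈ Ioo (x k) (ζ k), (h + C c * g).eval y = 0 → y = η c k :=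
    fun c hc k hk y hy hy0 => H.eq_of_eval_C_mul_nodal_eq_zero (hη c hc).1 (by positivity) hk hy
      ((hη c hc).2 ▸ hy0)
  have hsign_g : ∀ k < n, ∀ t ∈ Ico (x k) (ζ k), 0 < (-1) ^ (n - k) * g.eval t :=
    fun k hk t ht => hg ▸ H.sign_mul_eval_C_mul_nodal_zeta_pos hb hk ht
  have hsign_h : ∀ k < n, (-1) ^ (n - k) * h.eval (ζ k) < 0 :=
    fun k hk => hh ▸ H.sign_mul_eval_C_mul_nodal_x_neg ha hk ⟨H.1 k hk, le_rfl⟩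
  have hg_zeta : ∀ k < n, g.eval (ζ k) = 0 :=
    fun k hk => hg ▸ eval_C_mul_nodal_at_node _ (mem_range.2 hk)
  have hg' : ∀ k < n, (derivative g).eval (ζ k) ≠ 0 := fun k hk => by
    rw [hg, derivative_C_mul, eval_mul, eval_C]
    exact mul_ne_zero hb.ne' (eval_derivative_nodal_ne_zero H.injOn_zeta (mem_range.2 hk))
  have hlim : ∀ k < n, Tendsto (fun c => η c k) atTop (𝓝 (ζ k)) := fun k hk =>
    tendsto_root_pencil (H.1 k hk) (hsign_g k hk) (hsign_h k hk) (hg_zeta k hk)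
      (by filter_upwards [eventually_gt_atTop 0] with c hc using
        ⟨(hη c hc).1 k hk, huniq c hc k hk⟩)
  refine ⟨η, fun c hc => ⟨(hη c hc).2, (hη c hc).1, fun k hk => ?_⟩,
    fun k hk c hc c' hc' hcc' => ?_, hlim, fun k hk => ?_⟩
  · exact (((hη c hc).1 k (by omega)).2.trans (hint2 k hk)).trans ((hη c hc).1 (k + 1) hk).1
  · exact root_pencil_lt (hsign_g k hk) (hsign_h k hk) (hg_zeta k hk) hcc' ((hη c hc).1 k hk)
      (hroot c hc k hk) (huniq c' hc' k hk)
  · refine tendsto_mul_sub_root_pencil (hg_zeta k hk) (hg' k hk)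
      (tendsto_nhdsWithin_iff.2 ⟨hlim k hk, ?_⟩) ?_
    · filter_upwards [eventually_gt_atTop 0] with c hc using ((hη c hc).1 k hk).2.ne
    · filter_upwards [eventually_gt_atTop 0] with c hc using hroot c hc k hk

/-- Zeros of `f = h + c·g` when the zeros interlace as
`x₁ < ζ₁ < x₂ < ζ₂ < ⋯ < xₙ < ζₙ`.  For every `c > 0` the polynomial `f` factors with
`n` real simple zeros `η_k(c)` satisfying `x_k < η_k(c) < ζ_k`; each `η_k` is strictly
increasing in `c`, `η_k(c) → ζ_k` as `c → ∞`, and `c·(ζ_k − η_k(c)) → h(ζ_k)/g'(ζ_k)`. -/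
theorem stmt_1 (n : ℕ) (hn : 0 < n) (a b : ℝ) (ha : 0 < a) (hb : 0 < b)
    (x ζ : ℕ → ℝ) (h g : Polynomial ℝ)
    (hh : h = C a * ∏ k ∈ Finset.range n, (X - C (x k)))
    (hg : g = C b * ∏ k ∈ Finset.range n, (X - C (ζ k)))
    (hint1 : ∀ k < n, x k < ζ k)
    (hint2 : ∀ k, k + 1 < n → ζ k < x (k + 1)) :
    ∃ η : ℝ → ℕ → ℝ,
      (∀ c : ℝ, 0 < c →
        (h + C c * g = C (a + c * b) * ∏ k ∈ Finset.range n, (X - C (η c k))) ∧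
        (∀ k < n, x k < η c k ∧ η c k < ζ k) ∧
        (∀ k, k + 1 < n → η c k < η c (k + 1))) ∧
      (∀ k < n, StrictMonoOn (fun c => η c k) (Set.Ioi (0 : ℝ))) ∧
      (∀ k < n, Tendsto (fun c => η c k) atTop (𝓝 (ζ k))) ∧
      (∀ k < n, Tendsto (fun c => c * (ζ k - η c k)) atTop
        (𝓝 (h.eval (ζ k) / (derivative g).eval (ζ k)))) :=
  stmt_1_general n a b ha hb x ζ h g hh hg hint1 hint2
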